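/- Let R be a domain and r a finitary ideal system on R. If the localized ideal semigroup I_{r_m}(R_m) is unit-cancellative for every r-maximal r-ideal m of R, then I_r(R) is unit-cancellative. -/

import Mathlib

open Pointwise

/-! If `J ≠ R`, a Zorn argument (this is where finitarity enters) puts `J` inside an
`r`-maximal `r`-ideal `m`, which is prime. Localizing commutes with `r`-closure, so
`(I_m J_m)_{r_m} = I_m` and local unit-cancellativity gives `J_m = R_m`, i.e. `J ⊄ m`. -/

/-- An ideal system `r` on an integral domain `R`, with the standing convention that
every `r`-ideal is an ordinary ring ideal (`I_r(R) ⊆ I(R)`). The map `cl` is the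
closure `X ↦ X_r`. -/
structure IdealSystem (R : Type*) [CommRing R] [IsDomain R] where
  cl : Set R → Set R
  subset_cl : ∀ X : Set R, X ⊆ cl X
  cl_mono : ∀ X Y : Set R, X ⊆ cl Y → cl X ⊆ cl Y
  principal_subset : ∀ c : R, {x : R | ∃ y : R, x = c * y} ⊆ cl {c}
  smul_cl : ∀ (c : R) (X : Set R), c • cl X = cl (c • X)
  zero_mem : ∀ X : Set R, (0 : R) ∈ cl X
  add_mem : ∀ X : Set R, ∀ a ∈ cl X, ∀ b ∈ cl X, a + b ∈ cl X
  mul_mem : ∀ (X : Set R) (r : R), ∀ a ∈ cl X, r * a ∈ cl X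

variable {R : Type*} [CommRing R] [IsDomain R]

/-- `I` is a nonzero `r`-ideal, i.e. an element of the semigroup `I_r(R)`. -/
def IdealSystem.IsRIdeal (rs : IdealSystem R) (I : Set R) : Prop :=
  rs.cl I = I ∧ I ≠ {0}

/-- The closure operation of the induced ideal system `r_m` on the localization
`R_m` at a prime `m`, applied to an ideal `J` of `R_m`: it is the localization
`((J ∩ R)_r)_m` of the `r`-closure of the contraction of `J`. -/
def IdealSystem.locCl (rs : IdealSystem R) (m : Ideal R) [m.IsPrime]
    (J : Ideal (Localization.AtPrime m)) : Set (Localization.AtPrime m) :=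
  {x | ∃ a ∈ rs.cl ((algebraMap R (Localization.AtPrime m)) ⁻¹' (J : Set (Localization.AtPrime m))),
      ∃ s ∈ m.primeCompl,
        x * algebraMap R (Localization.AtPrime m) s = algebraMap R (Localization.AtPrime m) a}

theorem Ideal.exists_mem_submonoid_forall_mul_mem {A : Type*} [CommSemiring A]
    {S : Submonoid A} {L : Ideal A} (E : Finset A) (h : ∀ e ∈ E, ∃ s ∈ S, s * e ∈ L) :
    ∃ s ∈ S, ∀ e ∈ E, s * e ∈ L := by
  classical
  induction E using Finset.induction_on with
  | empty => exact ⟨1, S.one_mem, by simp⟩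
  | insert a E _ ih =>
    obtain ⟨s, hs, hsE⟩ := ih fun e he => h e (Finset.mem_insert_of_mem he)
    obtain ⟨t, ht, hta⟩ := h a (Finset.mem_insert_self a E)
    refine ⟨t * s, S.mul_mem ht hs, ?_⟩
    simp only [Finset.mem_insert, forall_eq_or_imp]
    refine ⟨?_, fun e he => ?_⟩
    · rw [mul_right_comm]
      exact L.mul_mem_right s hta
    · rw [mul_assoc]
      exact L.mul_mem_left t (hsE e he)

namespace IdealSystem

variable (rs : IdealSystem R)

def IsFinitary : Prop :=
  ∀ (X : Set R), ∀ x ∈ rs.cl X, ∃ E : Finset R, ↑E ⊆ X ∧ x ∈ rs.cl ↑E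

def IsRMaximal (M : Set R) : Prop :=
  rs.cl M = M ∧ M ≠ Set.univ ∧ ∀ J : Set R, rs.cl J = J → J ≠ Set.univ → M ⊆ J → J = M

lemma cl_subset_cl {X Y : Set R} (h : X ⊆ Y) : rs.cl X ⊆ rs.cl Y :=
  rs.cl_mono X Y (h.trans (rs.subset_cl Y))

@[simp] lemma cl_cl (X : Set R) : rs.cl (rs.cl X) = rs.cl X :=
  (rs.cl_mono _ _ subset_rfl).antisymm (rs.subset_cl _)

lemma smul_cl_subset (a : R) {X Y : Set R} (h : a • X ⊆ rs.cl Y) : a • rs.cl X ⊆ rs.cl Y := by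
  rw [rs.smul_cl]
  exact rs.cl_mono _ _ h

lemma eq_univ_iff_one_mem {K : Set R} (hK : rs.cl K = K) : K = Set.univ ↔ (1 : R) ∈ K := by
  refine ⟨fun h => h ▸ Set.mem_univ 1, fun h1 => Set.eq_univ_of_forall fun r => ?_⟩
  simpa [hK] using rs.mul_mem K r 1 (hK.symm ▸ h1)

def clIdeal (X : Set R) : Ideal R where
  carrier := rs.cl X
  zero_mem' := rs.zero_mem X
  add_mem' ha hb := rs.add_mem X _ ha _ hb
  smul_mem' c _ ha := rs.mul_mem X c _ ha

@[simp] lemma coe_clIdeal (X : Set R) : (rs.clIdeal X : Set R) = rs.cl X := rfl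

lemma mul_subset_cl_mul (X Y : Set R) : rs.cl X * rs.cl Y ⊆ rs.cl (X * Y) := by
  have hX : ∀ x ∈ X, x • rs.cl Y ⊆ rs.cl (X * Y) := fun x hx =>
    rs.smul_cl_subset x ((Set.smul_set_subset_mul hx).trans (rs.subset_cl _))
  rintro _ ⟨x, hx, y, hy, rfl⟩
  have hyX : y • X ⊆ rs.cl (X * Y) := by
    rintro _ ⟨x', hx', rfl⟩
    show y * x' ∈ _
    rw [mul_comm y x']
    exact hX x' hx' (Set.smul_mem_smul_set hy)
  show x * y ∈ _
  rw [mul_comm x y]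
  exact rs.smul_cl_subset y hyX (Set.smul_mem_smul_set hx)

lemma cl_cl_mul_cl (X Y : Set R) : rs.cl (rs.cl X * rs.cl Y) = rs.cl (X * Y) :=
  (rs.cl_mono _ _ (rs.mul_subset_cl_mul X Y)).antisymm
    (rs.cl_subset_cl (Set.mul_subset_mul (rs.subset_cl X) (rs.subset_cl Y)))

lemma cl_coe_mul (L L' : Ideal R) : rs.cl ↑(L * L') = rs.cl (↑L * ↑L') := by
  refine (rs.cl_mono _ _ ?_).antisymm (rs.cl_subset_cl (Submodule.mul_subset_mul L L'))
  show L * L' ≤ rs.clIdeal (↑L * ↑L')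
  exact Ideal.mul_le.2 fun a ha b hb => rs.subset_cl _ (Set.mul_mem_mul ha hb)

lemma cl_coe_clIdeal_mul (X Y : Set R) :
    rs.cl ↑(rs.clIdeal X * rs.clIdeal Y) = rs.cl (X * Y) := by
  rw [cl_coe_mul, coe_clIdeal, coe_clIdeal, cl_cl_mul_cl]

variable {rs}

lemma IsRIdeal.clIdeal_ne_bot {X : Set R} (hX : rs.IsRIdeal X) : rs.clIdeal X ≠ ⊥ :=
  fun h => hX.2 (by rw [← hX.1, ← coe_clIdeal, h, Submodule.bot_coe])

lemma IsFinitary.cl_sUnion (hfin : rs.IsFinitary) {c : Set (Set R)} (hne : c.Nonempty)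
    (hdir : DirectedOn (· ⊆ ·) c) (hc : ∀ K ∈ c, rs.cl K = K) : rs.cl (⋃₀ c) = ⋃₀ c := by
  refine Set.Subset.antisymm (fun x hx => ?_) (rs.subset_cl _)
  obtain ⟨E, hE, hxE⟩ := hfin _ x hx
  obtain ⟨K, hK, hEK⟩ := hdir.exists_mem_subset_of_finite_of_subset_sUnion hne E.finite_toSet hE
  exact ⟨K, hK, hc K hK ▸ rs.cl_subset_cl hEK hxE⟩

lemma IsFinitary.exists_isRMaximal_superset (hfin : rs.IsFinitary) {J : Set R}
    (hJ : rs.cl J = J) (hJ_ne : J ≠ Set.univ) : ∃ M, J ⊆ M ∧ rs.IsRMaximal M := by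
  obtain ⟨M, hJM, hM⟩ := zorn_subset_nonempty {K | rs.cl K = K ∧ (1 : R) ∉ K}
    (fun c hc hchain hne => ⟨⋃₀ c,
      ⟨hfin.cl_sUnion hne hchain.directedOn fun K hK => (hc hK).1,
        fun ⟨K, hK, h1⟩ => (hc hK).2 h1⟩,
      fun _ => Set.subset_sUnion_of_mem⟩)
    J ⟨hJ, mt (rs.eq_univ_iff_one_mem hJ).2 hJ_ne⟩
  refine ⟨M, hJM, hM.1.1, mt (rs.eq_univ_iff_one_mem hM.1.1).1 hM.1.2,
    fun K hK hK_ne hMK => (hM.eq_of_subset ⟨hK, ?_⟩ hMK).symm⟩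
  exact mt (rs.eq_univ_iff_one_mem hK).2 hK_ne

lemma IsRMaximal.one_mem_cl_insert {M : Set R} (hM : rs.IsRMaximal M) {a : R} (ha : a ∉ M) :
    (1 : R) ∈ rs.cl (insert a M) := by
  rw [← rs.eq_univ_iff_one_mem (rs.cl_cl _)]
  by_contra h_ne
  have h_eq := hM.2.2 _ (rs.cl_cl _) h_ne ((Set.subset_insert a M).trans (rs.subset_cl _))
  exact ha (h_eq ▸ rs.subset_cl _ (Set.mem_insert a M))

lemma IsRMaximal.isPrime {M : Set R} (hM : rs.IsRMaximal M) : (rs.clIdeal M).IsPrime := by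
  have hm : (rs.clIdeal M : Set R) = M := hM.1
  have hmem : ∀ {x}, x ∈ rs.clIdeal M ↔ x ∈ M := by
    intro x
    rw [← SetLike.mem_coe, hm]
  refine ⟨fun h => hM.2.1 (by rw [← hm, h, Submodule.top_coe]), fun {a b} hab => ?_⟩
  simp only [hmem] at hab ⊢
  by_contra! h
  have h_prod : insert a M * insert b M ⊆ M := by
    rintro _ ⟨u, hu, v, hv, rfl⟩
    rcases hu with rfl | hu
    · rcases hv with rfl | hv
      · exact hab
      · exact hmem.1 ((rs.clIdeal M).mul_mem_left u (hmem.2 hv))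
    · exact hmem.1 ((rs.clIdeal M).mul_mem_right v (hmem.2 hu))
  have h1 : (1 : R) * 1 ∈ rs.cl (insert a M * insert b M) := rs.mul_subset_cl_mul _ _
    (Set.mul_mem_mul (hM.one_mem_cl_insert h.1) (hM.one_mem_cl_insert h.2))
  rw [one_mul] at h1
  exact hM.2.1 ((rs.eq_univ_iff_one_mem hM.1).2 (hM.1 ▸ rs.cl_subset_cl h_prod h1))

lemma IsFinitary.exists_mul_mem_cl_of_mem_cl (hfin : rs.IsFinitary) (S : Submonoid R)
    (L : Ideal R) {a : R} (ha : a ∈ rs.cl {b | ∃ s ∈ S, s * b ∈ L}) :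
    ∃ s ∈ S, s * a ∈ rs.cl L := by
  obtain ⟨E, hE, haE⟩ := hfin _ a ha
  obtain ⟨s, hs, hsE⟩ := Ideal.exists_mem_submonoid_forall_mul_mem E fun e he => hE he
  refine ⟨s, hs, rs.smul_cl_subset s ?_ (Set.smul_mem_smul_set haE)⟩
  rintro _ ⟨e, he, rfl⟩
  exact rs.subset_cl _ (hsE e he)

lemma IsFinitary.locCl_map (hfin : rs.IsFinitary) (m : Ideal R) [m.IsPrime] {L K : Ideal R}
    (hLK : rs.cl L = K) :
    rs.locCl m (L.map (algebraMap R (Localization.AtPrime m))) =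
      K.map (algebraMap R (Localization.AtPrime m)) := by
  set f := algebraMap R (Localization.AtPrime m)
  have h_sat : f ⁻¹' (L.map f) = {b | ∃ s ∈ m.primeCompl, s * b ∈ L} :=
    Set.ext (IsLocalization.algebraMap_mem_map_algebraMap_iff m.primeCompl _ L)
  ext x
  rw [locCl, h_sat, SetLike.mem_coe, IsLocalization.mem_map_algebraMap_iff m.primeCompl]
  constructor
  · rintro ⟨a, ha, s, hs, hx⟩
    obtain ⟨t, ht, hta⟩ := hfin.exists_mul_mem_cl_of_mem_cl m.primeCompl L ha
    have hta' : t * a ∈ K := (hLK ▸ hta : t * a ∈ (K : Set R))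
    refine ⟨⟨⟨t * a, hta'⟩, ⟨s * t, m.primeCompl.mul_mem hs ht⟩⟩, ?_⟩
    simp only [map_mul]
    rw [← mul_assoc, hx, mul_comm]
  · rintro ⟨⟨⟨a, ha⟩, s⟩, hx⟩
    have hL : (L : Set R) ⊆ {b | ∃ s ∈ m.primeCompl, s * b ∈ L} :=
      fun b hb => ⟨1, m.primeCompl.one_mem, by rwa [one_mul]⟩
    exact ⟨a, rs.cl_subset_cl hL (hLK.symm ▸ ha), s, s.2, hx⟩

end IdealSystem

/-- Let `r` be a finitary ideal system on the domain `R`. If for every `r`-maximal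
`r`-ideal `m` of `R` the localized ideal semigroup `I_{r_m}(R_m)` is unit-cancellative,
then `I_r(R)` is unit-cancellative. -/
theorem unitCancellative_of_local (rs : IdealSystem R)
    (hfin : ∀ (X : Set R), ∀ x ∈ rs.cl X, ∃ E : Finset R, ↑E ⊆ X ∧ x ∈ rs.cl ↑E)
    (hloc : ∀ (m : Ideal R) [m.IsPrime], rs.cl ↑m = (m : Set R) →
      (m : Set R) ≠ Set.univ →
      (∀ J : Set R, rs.cl J = J → J ≠ Set.univ → (m : Set R) ⊆ J → J = ↑m) →
      ∀ I J : Ideal (Localization.AtPrime m), I ≠ ⊥ → J ≠ ⊥ →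
        rs.locCl m I = (I : Set (Localization.AtPrime m)) →
        rs.locCl m J = (J : Set (Localization.AtPrime m)) →
        rs.locCl m (I * J) = (I : Set (Localization.AtPrime m)) → J = ⊤) :
    ∀ I J : Set R, rs.IsRIdeal I → rs.IsRIdeal J → rs.cl (I * J) = I →
      J = Set.univ := by
  intro I J hI hJ hIJ
  have hfin : rs.IsFinitary := hfin
  by_contra hJ_ne
  obtain ⟨M, hJM, hM⟩ := hfin.exists_isRMaximal_superset hJ.1 hJ_ne
  have hm_prime := hM.isPrime
  set m := rs.clIdeal M
  have hm : rs.IsRMaximal m := by rwa [rs.coe_clIdeal, hM.1]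
  set f := algebraMap R (Localization.AtPrime m)
  have h_ne_bot : ∀ {X}, rs.IsRIdeal X → (rs.clIdeal X).map f ≠ ⊥ := fun hX => by
    rw [Ne, Ideal.map_eq_bot_iff_of_injective
      (IsLocalization.injective _ m.primeCompl_le_nonZeroDivisors)]
    exact hX.clIdeal_ne_bot
  have h_closed : ∀ X, rs.locCl m ((rs.clIdeal X).map f) = (rs.clIdeal X).map f :=
    fun X => hfin.locCl_map m (rs.cl_cl X)
  have h_prod :
      rs.locCl m ((rs.clIdeal I).map f * (rs.clIdeal J).map f) = (rs.clIdeal I).map f := by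
    rw [← Ideal.map_mul]
    exact hfin.locCl_map m (by rw [rs.cl_coe_clIdeal_mul, hIJ, rs.coe_clIdeal, hI.1])
  have h_top := hloc m hm.1 hm.2.1 hm.2.2 _ _ (h_ne_bot hI) (h_ne_bot hJ)
    (h_closed I) (h_closed J) h_prod
  have h_disj : Disjoint (m.primeCompl : Set R) (rs.clIdeal J) :=
    Set.disjoint_left.2 fun s hs hsJ => hs (rs.subset_cl M (hJM (hJ.1 ▸ hsJ)))
  exact (IsLocalization.map_algebraMap_ne_top_iff_disjoint m.primeCompl _ _).2 h_disj h_top
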